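/- For n = 2, the iterates of the Ducci map on ℕ^2 applied to (0,1) satisfy Dℕ^α(0,1) = (2^{α−1}, 2^{α−1}) for every integer α ≥ 1; consequently, in (ZMod 2^l)^2 with l ≥ 1, D^{l+1}(0,1) = (0,0) while D^l(0,1) = (2^{l−1}, 2^{l−1}) ≠ (0,0), so L_{2^l}(2) = l+1. -/
import Mathlib


/-- The Ducci map on `ℕ^n` with cyclic indexing:
`Dℕ(x_1,…,x_n) = (x_1+x_2, x_2+x_3, …, x_n+x_1)`. -/
def ducciNat (n : ℕ) (x : Fin n → ℕ) : Fin n → ℕ :=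
  fun i => x i + x ⟨(i.val + 1) % n, Nat.mod_lt _ i.pos⟩

/-- The Ducci map on `(ZMod m)^n` with cyclic indexing:
`D(x_1,…,x_n) = (x_1+x_2, x_2+x_3, …, x_n+x_1)`. -/
def ducci (n m : ℕ) (x : Fin n → ZMod m) : Fin n → ZMod m :=
  fun i => x i + x ⟨(i.val + 1) % n, Nat.mod_lt _ i.pos⟩

lemma ducciNat_pair (a b : ℕ) : ducciNat 2 ![a, b] = ![a + b, b + a] := by
  funext i; fin_cases i <;> simp [ducciNat]

lemma ducci_pair (m : ℕ) (a b : ZMod m) : ducci 2 m ![a, b] = ![a + b, b + a] := by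
  funext i; fin_cases i <;> simp [ducci]

lemma ducciNat_iter (α : ℕ) (hα : 1 ≤ α) :
    (ducciNat 2)^[α] ![0, 1] = ![2 ^ (α - 1), 2 ^ (α - 1)] := by
  induction α with
  | zero => omega
  | succ k ih =>
    rcases Nat.eq_zero_or_pos k with hk | hk
    · subst hk; simp [ducciNat_pair]
    · rw [Function.iterate_succ_apply', ih hk, ducciNat_pair]
      have : k + 1 - 1 = (k - 1) + 1 := by omega
      rw [this]; ring_nf

lemma ducci_iter (m : ℕ) (α : ℕ) (hα : 1 ≤ α) :
    (ducci 2 m)^[α] ![0, 1] = ![(2 ^ (α - 1) : ZMod m), 2 ^ (α - 1)] := by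
  induction α with
  | zero => omega
  | succ k ih =>
    rcases Nat.eq_zero_or_pos k with hk | hk
    · subst hk; simp [ducci_pair]
    · rw [Function.iterate_succ_apply', ih hk, ducci_pair]
      have : k + 1 - 1 = (k - 1) + 1 := by omega
      rw [this]; ring_nf

/-- For `n = 2`: `Dℕ^α(0,1) = (2^(α-1), 2^(α-1))` for `α ≥ 1`; consequently in
`(ZMod 2^l)^2` with `l ≥ 1`, `D^(l+1)(0,1) = (0,0)` while
`D^l(0,1) = (2^(l-1), 2^(l-1)) ≠ (0,0)`, so `L_{2^l}(2) = l+1`. -/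
theorem ducci_two_tuple (l : ℕ) (hl : 1 ≤ l) :
    (∀ α : ℕ, 1 ≤ α → (ducciNat 2)^[α] ![0, 1] = ![2 ^ (α - 1), 2 ^ (α - 1)]) ∧
      (ducci 2 (2 ^ l))^[l + 1] ![0, 1] = 0 ∧
      (ducci 2 (2 ^ l))^[l] ![0, 1] = ![(2 ^ (l - 1) : ZMod (2 ^ l)), 2 ^ (l - 1)] ∧
      (ducci 2 (2 ^ l))^[l] ![0, 1] ≠ 0 ∧
      IsLeast {α : ℕ | ∃ β : ℕ, 1 ≤ β ∧
          (ducci 2 (2 ^ l))^[α + β] ![0, 1] = (ducci 2 (2 ^ l))^[α] ![0, 1]}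
        (l + 1) := by
  haveI : NeZero (2 ^ l) := ⟨by positivity⟩
  have hpow0 : (2 : ZMod (2 ^ l)) ^ l = 0 := by
    have := ZMod.natCast_self (2 ^ l)
    push_cast at this
    exact this
  have h2 : (ducci 2 (2 ^ l))^[l + 1] ![0, 1] = 0 := by
    rw [ducci_iter _ _ (by omega)]
    simp [hpow0]
  have hpowcast : ∀ k : ℕ, (2 : ZMod (2 ^ l)) ^ k = ((2 ^ k : ℕ) : ZMod (2 ^ l)) := by
    intro k; push_cast; ring
  have hne : (2 : ZMod (2 ^ l)) ^ (l - 1) ≠ 0 := by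
    rw [hpowcast]
    intro h0
    rw [ZMod.natCast_eq_zero_iff] at h0
    have hdvd := h0
    have := (Nat.pow_dvd_pow_iff_le_right one_lt_two).mp hdvd
    omega
  refine ⟨fun α hα => ducciNat_iter α hα, h2, ducci_iter _ _ hl, ?_, ?_, ?_⟩
  · rw [ducci_iter _ _ hl]
    intro h
    apply hne
    have := congrFun h 0
    simpa using this
  · exact ⟨1, le_refl 1, by
      rw [h2, Function.iterate_succ_apply', h2]
      funext i; fin_cases i <;> simp [ducci]⟩
  · rintro α ⟨β, hβ, heq⟩
    by_contra h
    push_neg at h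
    have hαl : α ≤ l := by omega
    rcases Nat.eq_zero_or_pos α with h0 | h1
    · subst h0
      simp only [Nat.zero_add, Function.iterate_zero_apply] at heq
      rw [ducci_iter _ _ hβ] at heq
      have e0 := congrFun heq 0
      have e1 := congrFun heq 1
      simp at e0 e1
      rw [e0] at e1
      haveI : Fact (1 < 2 ^ l) := ⟨by have := Nat.one_lt_two_pow_iff.mpr (by omega : l ≠ 0); omega⟩
      exact one_ne_zero e1.symm
    · rw [ducci_iter _ _ (by omega), ducci_iter _ _ h1] at heq
      have e0 := congrFun heq 0
      simp only [Matrix.cons_val_zero] at e0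
      rw [hpowcast, hpowcast] at e0
      rw [ZMod.natCast_eq_natCast_iff] at e0
      have hle : 2 ^ (α - 1) ≤ 2 ^ (α + β - 1) :=
        Nat.pow_le_pow_right (by norm_num) (by omega)
      have hdvd : 2 ^ l ∣ 2 ^ (α + β - 1) - 2 ^ (α - 1) :=
        (Nat.modEq_iff_dvd' hle).mp e0.symm
      have hsplit : 2 ^ (α + β - 1) - 2 ^ (α - 1) = 2 ^ (α - 1) * (2 ^ β - 1) := by
        have : 2 ^ (α + β - 1) = 2 ^ (α - 1) * 2 ^ β := by
          rw [← pow_add]; congr 1; omega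
        rw [this, Nat.mul_sub, Nat.mul_one]
      rw [hsplit] at hdvd
      have hodd : Odd (2 ^ β - 1) := by
        refine Nat.Even.sub_odd ?_ ?_ odd_one
        · exact Nat.one_le_two_pow
        · exact (Nat.even_pow' (by omega)).mpr even_two
      have hcop : Nat.Coprime (2 ^ l) (2 ^ β - 1) :=
        Nat.Coprime.pow_left _ (Nat.coprime_two_left.mpr hodd)
      have := (Nat.Coprime.dvd_of_dvd_mul_right hcop hdvd)
      have := (Nat.pow_dvd_pow_iff_le_right one_lt_two).mp this
      omega
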